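/- The number of nilpotent elements of IS_n equals the number of partial injective maps from {2,3,...,n} to {1,2,...,n}. -/

import Mathlib

def IsPInj (n : ℕ) (f : Fin n → Option (Fin n)) : Prop :=
  ∀ a b c, f a = some c → f b = some c → a = b

instance (n : ℕ) : DecidablePred (IsPInj n) := fun _ =>
  inferInstanceAs (Decidable (∀ _ _ _, _ → _ → _))

/-- The symmetric inverse semigroup `IS_n`: partial injective maps on `{1,…,n}`. -/
def PInj (n : ℕ) := {f : Fin n → Option (Fin n) // IsPInj n f}

instance (n : ℕ) : Fintype (PInj n) := Subtype.fintype _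

/-- `iterMap n f k x` is `f^k(x)` as a partial map. -/
def iterMap (n : ℕ) (f : Fin n → Option (Fin n)) : ℕ → Fin n → Option (Fin n)
  | 0, x => some x
  | k + 1, x => (f x).bind (iterMap n f k)

/-- Size of the domain of a partial injection. -/
def domCard (n : ℕ) (α : PInj n) : ℕ :=
  (Finset.univ.filter (fun x => α.val x ≠ none)).card

/-- `α` is nilpotent: some positive power is the empty map. -/
def Nilpotent (n : ℕ) (α : PInj n) : Prop :=
  ∃ k, 0 < k ∧ ∀ x, iterMap n α.val k x = none

/-- `|IS_m| = ∑_j binom(m,j)^2 j!`. -/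
def cardIS (m : ℕ) : ℕ := ∑ j ∈ Finset.range (m + 1), (m.choose j) ^ 2 * j.factorial


/-- Partial injective maps from `Fin a` to `Fin b`. -/
def PInj2 (a b : ℕ) := {f : Fin a → Option (Fin b) // ∀ x y c, f x = some c → f y = some c → x = y}


/-!
Fix a point `e`. A nilpotent partial injection `α` is a disjoint union of paths; let
`e → t₀ → t₁ → ⋯ → tₘ` be the path leaving `e`. Removing the arrow out of `e` and replacing the
arrows `tᵢ → tᵢ₊₁` by the permutation of `{t₀, …, tₘ}` whose one-line notation, with respect to
the increasing enumeration of that set, is `t₀ t₁ ⋯ tₘ`, gives a partial injection `β` with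
`e ∉ dom β`. Conversely, the cycles of such a `β` consist of the points at which every power of
`β` is defined, and reading `β` on them in one-line notation recovers the path. Hence the
nilpotent elements of `IS_n` are equinumerous with the partial injections not defined at `e`.
-/

variable {n : ℕ}

section Iterates

variable (f : Fin n → Option (Fin n))

theorem iterMap_succ (k : ℕ) (x : Fin n) : iterMap n f (k + 1) x = (f x).bind (iterMap n f k) :=
  rfl

theorem iterMap_add (a b : ℕ) (x : Fin n) :
    iterMap n f (a + b) x = (iterMap n f a x).bind (iterMap n f b) := by
  induction a generalizing x with
  | zero => rw [Nat.zero_add]; rfl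
  | succ a ih => simp only [Nat.add_right_comm a 1 b, iterMap_succ, Option.bind_assoc, ih]

theorem iterMap_one (x : Fin n) : iterMap n f 1 x = f x :=
  Option.bind_fun_some (f x)

theorem iterMap_succ' (k : ℕ) (x : Fin n) : iterMap n f (k + 1) x = (iterMap n f k x).bind f := by
  simp only [iterMap_add, iterMap_one]

variable {f}

theorem iterMap_eq_none_of_le {a b : ℕ} {x : Fin n} (h : iterMap n f a x = none) (hab : a ≤ b) :
    iterMap n f b x = none := by
  obtain ⟨c, rfl⟩ := Nat.exists_eq_add_of_le hab
  rw [iterMap_add, h, Option.bind_none]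

end Iterates

/-- For a partial injection of a finite set these are exactly the points on its cycles. -/
def AlwaysDefined (f : Fin n → Option (Fin n)) (x : Fin n) : Prop :=
  ∀ k, iterMap n f k x ≠ none

section AlwaysDefined

variable {f g : Fin n → Option (Fin n)} {x : Fin n}

theorem AlwaysDefined.exists_apply (h : AlwaysDefined f x) :
    ∃ y, f x = some y ∧ AlwaysDefined f y := by
  cases hx : f x with
  | none => exact absurd (by rw [iterMap_one, hx]) (h 1)
  | some y => exact ⟨y, rfl, fun k => by simpa [iterMap_succ, hx] using h (k + 1)⟩

theorem not_alwaysDefined_of_apply_eq_none (hx : f x = none) : ¬ AlwaysDefined f x :=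
  fun h => h 1 (by rw [iterMap_one, hx])

theorem alwaysDefined_of_iterMap_eq_self {k : ℕ} (hk : 0 < k) (h : iterMap n f k x = some x) :
    AlwaysDefined f x := by
  have hmul : ∀ q, iterMap n f (k * q) x = some x := by
    intro q
    induction q with
    | zero => rfl
    | succ q ih => rw [Nat.mul_succ, iterMap_add, ih, Option.bind_some, h]
  intro m hm
  have := iterMap_eq_none_of_le hm (Nat.le_mul_of_pos_left m hk)
  rw [hmul] at this
  exact Option.some_ne_none x this

theorem alwaysDefined_of_mapsTo {S : Set (Fin n)} (hS : ∀ y ∈ S, ∃ z ∈ S, f y = some z)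
    (hx : x ∈ S) : AlwaysDefined f x := by
  suffices ∀ k, ∀ y ∈ S, ∃ z ∈ S, iterMap n f k y = some z by
    intro k
    obtain ⟨z, -, hz⟩ := this k x hx
    simp [hz]
  intro k
  induction k with
  | zero => exact fun y hy => ⟨y, hy, rfl⟩
  | succ k ih =>
    intro y hy
    obtain ⟨z, hz, hyz⟩ := hS y hy
    simpa [iterMap_succ, hyz] using ih z hz

theorem AlwaysDefined.of_restrict {S : Set (Fin n)}
    (hres : ∀ y ∉ S, ∀ c, g y = some c → f y = some c)
    (hstay : ∀ y ∉ S, ∀ c, g y = some c → AlwaysDefined g c → c ∉ S)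
    (hx : x ∉ S) (h : AlwaysDefined g x) : AlwaysDefined f x := by
  suffices key : ∀ k x, x ∉ S → AlwaysDefined g x → iterMap n f k x = iterMap n g k x from
    fun k => key k x hx h ▸ h k
  intro k
  induction k with
  | zero => exact fun _ _ _ => rfl
  | succ k ih =>
    intro x hx h
    obtain ⟨c, hc, hgc⟩ := h.exists_apply
    rw [iterMap_succ, iterMap_succ, hc, hres x hx c hc]
    exact ih c (hstay x hx c hc hgc) hgc

end AlwaysDefined

theorem nilpotent_iff {α : PInj n} : Nilpotent n α ↔ ∀ x, ¬ AlwaysDefined α.val x := by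
  constructor
  · rintro ⟨k, -, hk⟩ x h
    exact h k (hk x)
  · intro h
    simp only [AlwaysDefined, not_forall, not_not] at h
    choose k hk using h
    exact ⟨Finset.univ.sup k + 1, Nat.succ_pos _, fun x =>
      iterMap_eq_none_of_le (hk x) ((Finset.le_sup (Finset.mem_univ x)).trans (Nat.le_succ _))⟩

def listAssoc (s L : List (Fin n)) (x : Fin n) : Option (Fin n) :=
  L[s.idxOf x]?

theorem listAssoc_getElem {s L : List (Fin n)} (hs : s.Nodup) {i : ℕ} (hi : i < s.length) :
    listAssoc s L s[i] = L[i]? := by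
  rw [listAssoc, hs.idxOf_getElem i hi]

theorem listAssoc_inj {s L : List (Fin n)} (hL : L.Nodup) {a b c : Fin n} (ha : a ∈ s)
    (hac : listAssoc s L a = some c) (hbc : listAssoc s L b = some c) : a = b := by
  obtain ⟨hi, rfl⟩ := List.getElem?_eq_some_iff.mp hac
  obtain ⟨hj, hji⟩ := List.getElem?_eq_some_iff.mp hbc
  exact (List.idxOf_inj ha).mp ((hL.getElem_inj_iff).mp hji).symm

theorem listAssoc_mem {s L : List (Fin n)} {a c : Fin n} (h : listAssoc s L a = some c) : c ∈ L :=
  List.mem_of_getElem? h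

def IsTrajectory (f : Fin n → Option (Fin n)) (l : List (Fin n)) : Prop :=
  ∀ i (hi : i < l.length), f l[i] = l[i + 1]?

/-- The first (at most `k + 1`) points of the forward orbit of `x`. -/
def trajectory (f : Fin n → Option (Fin n)) : ℕ → Fin n → List (Fin n)
  | 0, x => [x]
  | k + 1, x => x :: match f x with
    | none => []
    | some y => trajectory f k y

section Trajectory

variable {f : Fin n → Option (Fin n)} {l : List (Fin n)} {x : Fin n}

theorem isTrajectory_cons :
    IsTrajectory f (x :: l) ↔ f x = l[0]? ∧ IsTrajectory f l := by
  refine ⟨fun h => ⟨h 0 (by simp), fun i hi => ?_⟩, ?_⟩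
  · have := h (i + 1) (by simpa)
    rwa [List.getElem_cons_succ] at this
  rintro ⟨h0, h⟩ (_ | i) hi
  · simpa using h0
  · simpa using h i (by simpa using hi)

theorem IsTrajectory.iterMap_getElem (h : IsTrajectory f l) {i : ℕ} (hi : i < l.length) (k : ℕ) :
    iterMap n f k l[i] = l[i + k]? := by
  induction k with
  | zero => rw [Nat.add_zero, List.getElem?_eq_getElem hi]; rfl
  | succ k ih =>
    rw [iterMap_succ', ih, ← Nat.add_assoc]
    by_cases hk : i + k < l.length
    · rw [List.getElem?_eq_getElem hk, Option.bind_some, h _ hk]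
    · rw [List.getElem?_eq_none (by omega), List.getElem?_eq_none (by omega), Option.bind_none]

theorem IsTrajectory.not_alwaysDefined (h : IsTrajectory f l) (hx : x ∈ l) :
    ¬ AlwaysDefined f x := by
  obtain ⟨i, hi, rfl⟩ := List.getElem_of_mem hx
  intro hd
  exact hd l.length (by rw [h.iterMap_getElem hi, List.getElem?_eq_none (by omega)])

theorem IsTrajectory.mem_of_apply_mem_tail (h : IsTrajectory f l) (hf : IsPInj n f) {y c : Fin n}
    (hy : f y = some c) (hc : c ∈ l.tail) : y ∈ l := by
  obtain ⟨j, hj, rfl⟩ := List.getElem_of_mem hc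
  rw [List.getElem_tail] at hy
  have hj' : j + 1 < l.length := by simp at hj; omega
  have hstep : f l[j] = some l[j + 1] := by rw [h j (by omega), List.getElem?_eq_getElem hj']
  exact hf y l[j] _ hy hstep ▸ List.getElem_mem _

theorem IsTrajectory.apply_eq_listAssoc_tail (h : IsTrajectory f l) (hl : l.Nodup) (hx : x ∈ l) :
    f x = listAssoc l l.tail x := by
  obtain ⟨i, hi, rfl⟩ := List.getElem_of_mem hx
  rw [h i hi, listAssoc_getElem hl hi, List.getElem?_tail]

theorem trajectory_succ_of_apply_eq_none {k : ℕ} (hx : f x = none) :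
    trajectory f (k + 1) x = [x] := by
  simp [trajectory, hx]

theorem trajectory_succ_of_apply_eq_some {k : ℕ} {y : Fin n} (hx : f x = some y) :
    trajectory f (k + 1) x = x :: trajectory f k y := by
  simp [trajectory, hx]

theorem trajectory_getElem_zero (k : ℕ) (x : Fin n) (h : 0 < (trajectory f k x).length) :
    (trajectory f k x)[0] = x := by
  cases k <;> rfl

theorem iterMap_eq_getElem_trajectory :
    ∀ (k : ℕ) (x : Fin n) (i : ℕ) (hi : i < (trajectory f k x).length),
      iterMap n f i x = some (trajectory f k x)[i]
  | _, x, 0, _ => by rw [trajectory_getElem_zero]; rfl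
  | 0, x, i + 1, hi => by simp [trajectory] at hi
  | k + 1, x, i + 1, hi => by
    cases hx : f x with
    | none => simp [trajectory_succ_of_apply_eq_none hx] at hi
    | some y =>
      simp only [trajectory_succ_of_apply_eq_some hx, List.getElem_cons_succ] at hi ⊢
      rw [iterMap_succ, hx, Option.bind_some,
        iterMap_eq_getElem_trajectory k y i (by simpa using hi)]

theorem isTrajectory_trajectory :
    ∀ (k : ℕ) (x : Fin n), (trajectory f k x).length ≤ k → IsTrajectory f (trajectory f k x)
  | 0, x, h => by simp [trajectory] at h
  | k + 1, x, h => by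
    cases hx : f x with
    | none => simp [trajectory_succ_of_apply_eq_none hx, IsTrajectory, hx]
    | some y =>
      simp only [trajectory_succ_of_apply_eq_some hx, List.length_cons] at h ⊢
      refine isTrajectory_cons.mpr ⟨?_, isTrajectory_trajectory k y (by omega)⟩
      rw [hx, List.getElem?_eq_getElem (by cases k <;> simp [trajectory]),
        trajectory_getElem_zero]

theorem IsTrajectory.trajectory_eq :
    ∀ {k : ℕ} {x : Fin n} {l : List (Fin n)}, IsTrajectory f (x :: l) → l.length ≤ k →
      trajectory f k x = x :: l
  | 0, x, [], _, _ => rfl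
  | k + 1, x, [], h, _ =>
    trajectory_succ_of_apply_eq_none (by simpa using (isTrajectory_cons.mp h).1)
  | k + 1, x, y :: l, h, hl => by
    obtain ⟨hx, h⟩ := isTrajectory_cons.mp h
    rw [trajectory_succ_of_apply_eq_some hx, h.trajectory_eq (by simpa using hl)]

theorem nodup_trajectory (hf : ∀ y, ¬ AlwaysDefined f y) (k : ℕ) (x : Fin n) :
    (trajectory f k x).Nodup := by
  rw [List.nodup_iff_injective_get]
  intro ⟨i, hi⟩ ⟨j, hj⟩ hij
  simp only [List.get_eq_getElem, Fin.mk.injEq] at hij ⊢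
  by_contra hne
  wlog hlt : i < j generalizing i j
  · exact this j hj i hi hij.symm (Ne.symm hne) (by omega)
  apply hf (trajectory f k x)[i]
  refine alwaysDefined_of_iterMap_eq_self (Nat.sub_pos_of_lt hlt) ?_
  have := iterMap_add f i (j - i) x
  rw [Nat.add_sub_cancel' hlt.le, iterMap_eq_getElem_trajectory k x i hi,
    iterMap_eq_getElem_trajectory k x j hj, Option.bind_some] at this
  rw [← this, hij]

end Trajectory

theorem isPInj_piecewise (A : Finset (Fin n)) {h g : Fin n → Option (Fin n)}
    (hh : ∀ a ∈ A, ∀ b ∈ A, ∀ c, h a = some c → h b = some c → a = b)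
    (hg : ∀ a ∉ A, ∀ b ∉ A, ∀ c, g a = some c → g b = some c → a = b)
    (hhg : ∀ a ∈ A, ∀ b ∉ A, ∀ c, h a = some c → g b ≠ some c) :
    IsPInj n (A.piecewise h g) := by
  intro a b c ha hb
  by_cases haA : a ∈ A <;> by_cases hbA : b ∈ A <;>
    simp only [Finset.piecewise_eq_of_mem, Finset.piecewise_eq_of_notMem, haA, hbA,
      not_false_eq_true] at ha hb
  · exact hh a haA b hbA c ha hb
  · exact absurd hb (hhg a haA b hbA c ha)
  · exact absurd ha (hhg b hbA a haA c hb)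
  · exact hg a haA b hbA c ha hb

theorem IsPInj.update_none {g : Fin n → Option (Fin n)} (hg : IsPInj n g) (e : Fin n) :
    IsPInj n (Function.update g e none) := by
  intro a b c ha hb
  rcases eq_or_ne a e with rfl | hae
  · simp at ha
  rcases eq_or_ne b e with rfl | hbe
  · simp at hb
  rw [Function.update_of_ne hae] at ha
  rw [Function.update_of_ne hbe] at hb
  exact hg a b c ha hb

open Classical in
noncomputable def alwaysDefinedSet (f : Fin n → Option (Fin n)) : Finset (Fin n) :=
  Finset.univ.filter (AlwaysDefined f)

/-- `f` restricted to `alwaysDefinedSet f`, in one-line notation with respect to the increasing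
enumeration of that set (the default of `getD` is never used). -/
noncomputable def oneLine (f : Fin n → Option (Fin n)) : List (Fin n) :=
  (alwaysDefinedSet f).sort.map fun x => (f x).getD x

section OneLine

variable {f : Fin n → Option (Fin n)}

theorem mem_alwaysDefinedSet {x : Fin n} : x ∈ alwaysDefinedSet f ↔ AlwaysDefined f x := by
  classical
  simp [alwaysDefinedSet]

theorem length_oneLine : (oneLine f).length = (alwaysDefinedSet f).sort.length :=
  List.length_map _

theorem apply_eq_some_getD {x : Fin n} (hx : x ∈ alwaysDefinedSet f) :
    f x = some ((f x).getD x) := by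
  obtain ⟨y, hy, -⟩ := (mem_alwaysDefinedSet.mp hx).exists_apply
  rw [hy, Option.getD_some]

theorem apply_sort_getElem {i : ℕ} (hi : i < (alwaysDefinedSet f).sort.length) :
    f (alwaysDefinedSet f).sort[i] = some ((oneLine f)[i]'(length_oneLine ▸ hi)) := by
  simp only [oneLine, List.getElem_map]
  exact apply_eq_some_getD ((Finset.mem_sort _).mp (List.getElem_mem hi))

theorem nodup_oneLine (hf : IsPInj n f) : (oneLine f).Nodup := by
  refine List.Nodup.map_on (fun a ha b hb hab => ?_) (Finset.sort_nodup _ _)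
  rw [Finset.mem_sort] at ha hb
  exact hf a b _ (apply_eq_some_getD ha) (hab ▸ apply_eq_some_getD hb)

theorem toFinset_oneLine (hf : IsPInj n f) : (oneLine f).toFinset = alwaysDefinedSet f := by
  -- an injective self-map of a finite set is onto
  refine Finset.eq_of_subset_of_card_le (fun y hy => ?_) ?_
  · obtain ⟨x, hx, rfl⟩ := List.mem_map.mp (List.mem_toFinset.mp hy)
    obtain ⟨y, hy, hyd⟩ := (mem_alwaysDefinedSet.mp ((Finset.mem_sort _).mp hx)).exists_apply
    rw [hy, Option.getD_some]
    exact mem_alwaysDefinedSet.mpr hyd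
  · rw [List.toFinset_card_of_nodup (nodup_oneLine hf), length_oneLine, Finset.length_sort]

end OneLine

/-- Replace the path `e → L[0] → L[1] → ⋯` of `g` by the permutation of the points of `L` whose
one-line notation, with respect to the increasing enumeration of these points, is `L`; `e` leaves
the domain. -/
def cyclesOn (e : Fin n) (L : List (Fin n)) (g : Fin n → Option (Fin n)) :
    Fin n → Option (Fin n) :=
  L.toFinset.piecewise (listAssoc L.toFinset.sort L) (Function.update g e none)

/-- `f` with its cycles replaced by the path `e → (oneLine f)[0] → (oneLine f)[1] → ⋯`. -/
noncomputable def unroll (e : Fin n) (f : Fin n → Option (Fin n)) : Fin n → Option (Fin n) :=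
  let l := e :: oneLine f
  l.toFinset.piecewise (listAssoc l l.tail) f

noncomputable def roll (e : Fin n) (g : Fin n → Option (Fin n)) : Fin n → Option (Fin n) :=
  cyclesOn e (trajectory g n e).tail g

section CyclesOn

variable {e : Fin n} {L : List (Fin n)} {g : Fin n → Option (Fin n)}

theorem cyclesOn_apply_sort_getElem (hL : L.Nodup) {i : ℕ} (hi : i < L.toFinset.sort.length) :
    cyclesOn e L g L.toFinset.sort[i] = some (L[i]'(by
      rwa [Finset.length_sort, List.toFinset_card_of_nodup hL] at hi)) := by
  rw [cyclesOn, Finset.piecewise_eq_of_mem _ _ _ ((Finset.mem_sort _).mp (List.getElem_mem hi)),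
    listAssoc_getElem (Finset.sort_nodup _ _) hi, List.getElem?_eq_getElem]

theorem cyclesOn_apply_self (he : e ∉ L) : cyclesOn e L g e = none := by
  rw [cyclesOn, Finset.piecewise_eq_of_notMem _ _ _ (by simpa using he), Function.update_self]

theorem cyclesOn_apply_of_not_mem {x : Fin n} (hx : x ∉ L) (hxe : x ≠ e) :
    cyclesOn e L g x = g x := by
  rw [cyclesOn, Finset.piecewise_eq_of_notMem _ _ _ (by simpa using hx),
    Function.update_of_ne hxe]

theorem isPInj_cyclesOn (hg : IsPInj n g) (htr : IsTrajectory g (e :: L))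
    (hnd : (e :: L).Nodup) : IsPInj n (cyclesOn e L g) := by
  refine isPInj_piecewise _ (fun a ha b _ c hac hbc => listAssoc_inj (List.nodup_cons.mp hnd).2
      ((Finset.mem_sort _).mpr ha) hac hbc) (fun a _ b _ => hg.update_none e a b) ?_
  intro a _ b hb c hac hbc
  have hbe : b ≠ e := by rintro rfl; simp at hbc
  rw [Function.update_of_ne hbe] at hbc
  rcases List.mem_cons.mp (htr.mem_of_apply_mem_tail hg hbc (listAssoc_mem hac)) with h | h
  · exact hbe h
  · exact hb (List.mem_toFinset.mpr h)

theorem alwaysDefinedSet_cyclesOn (hg : IsPInj n g) (htr : IsTrajectory g (e :: L))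
    (hnd : (e :: L).Nodup) (hnil : ∀ x, ¬ AlwaysDefined g x) :
    alwaysDefinedSet (cyclesOn e L g) = L.toFinset := by
  have hL := (List.nodup_cons.mp hnd)
  ext x
  rw [mem_alwaysDefinedSet, List.mem_toFinset]
  have hout : ∀ y ∉ L, ∀ c, cyclesOn e L g y = some c → g y = some c ∧ c ∉ L := by
    intro y hy c hyc
    have hye : y ≠ e := by rintro rfl; rw [cyclesOn_apply_self hL.1] at hyc; cases hyc
    rw [cyclesOn_apply_of_not_mem hy hye] at hyc
    refine ⟨hyc, fun hc => ?_⟩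
    rcases List.mem_cons.mp (htr.mem_of_apply_mem_tail hg hyc hc) with h | h
    exacts [hye h, hy h]
  constructor
  · intro hx
    by_contra hxL
    exact hnil x (hx.of_restrict (S := {y | y ∈ L}) (fun y hy c hyc => (hout y hy c hyc).1)
      (fun y hy c hyc _ => (hout y hy c hyc).2) hxL)
  · refine alwaysDefined_of_mapsTo (S := {y | y ∈ L}) (fun y hy => ?_)
    have hy' : y ∈ L.toFinset.sort := (Finset.mem_sort _).mpr (List.mem_toFinset.mpr hy)
    obtain ⟨i, hi, rfl⟩ := List.getElem_of_mem hy'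
    exact ⟨_, List.getElem_mem _, cyclesOn_apply_sort_getElem hL.2 hi⟩

theorem oneLine_cyclesOn (hg : IsPInj n g) (htr : IsTrajectory g (e :: L))
    (hnd : (e :: L).Nodup) (hnil : ∀ x, ¬ AlwaysDefined g x) :
    oneLine (cyclesOn e L g) = L := by
  have hL := (List.nodup_cons.mp hnd).2
  have hset := alwaysDefinedSet_cyclesOn hg htr hnd hnil
  refine List.ext_getElem ?_ fun i h₁ h₂ => ?_
  · rw [length_oneLine, hset, Finset.length_sort, List.toFinset_card_of_nodup hL]
  · have hi : i < (alwaysDefinedSet (cyclesOn e L g)).sort.length := length_oneLine ▸ h₁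
    have := apply_sort_getElem hi
    simp only [hset] at this
    rw [cyclesOn_apply_sort_getElem hL] at this
    exact (Option.some_inj.mp this).symm

theorem unroll_cyclesOn (hg : IsPInj n g) (htr : IsTrajectory g (e :: L))
    (hnd : (e :: L).Nodup) (hnil : ∀ x, ¬ AlwaysDefined g x) :
    unroll e (cyclesOn e L g) = g := by
  funext x
  rw [unroll, oneLine_cyclesOn hg htr hnd hnil]
  by_cases hx : x ∈ e :: L
  · rw [Finset.piecewise_eq_of_mem _ _ _ (List.mem_toFinset.mpr hx),
      htr.apply_eq_listAssoc_tail hnd hx]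
  · rw [Finset.piecewise_eq_of_notMem _ _ _ (mt List.mem_toFinset.mp hx)]
    exact cyclesOn_apply_of_not_mem (fun h => hx (List.mem_cons_of_mem _ h))
      (fun h => hx (h ▸ List.mem_cons_self))

end CyclesOn

section Unroll

variable {e : Fin n} {f : Fin n → Option (Fin n)}

theorem mem_oneLine_of_apply_eq_some (hf : IsPInj n f) {b c : Fin n} (hb : f b = some c)
    (hc : c ∈ oneLine f) : b ∈ oneLine f := by
  obtain ⟨p, hp, rfl⟩ := List.mem_map.mp hc
  have hp : p ∈ alwaysDefinedSet f := (Finset.mem_sort _).mp hp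
  rw [← List.mem_toFinset, toFinset_oneLine hf, hf b p _ hb (apply_eq_some_getD hp)]
  exact hp

theorem nodup_cons_oneLine (hf : IsPInj n f) (he : f e = none) : (e :: oneLine f).Nodup := by
  refine List.nodup_cons.mpr ⟨fun h => ?_, nodup_oneLine hf⟩
  rw [← List.mem_toFinset, toFinset_oneLine hf, mem_alwaysDefinedSet] at h
  exact not_alwaysDefined_of_apply_eq_none he h

theorem unroll_apply_of_not_mem {x : Fin n} (hx : x ∉ e :: oneLine f) : unroll e f x = f x :=
  Finset.piecewise_eq_of_notMem _ _ _ (mt List.mem_toFinset.mp hx)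

theorem isTrajectory_unroll (hf : IsPInj n f) (he : f e = none) :
    IsTrajectory (unroll e f) (e :: oneLine f) := fun i hi => by
  rw [unroll, Finset.piecewise_eq_of_mem _ _ _ (List.mem_toFinset.mpr (List.getElem_mem hi)),
    listAssoc_getElem (nodup_cons_oneLine hf he) hi, List.getElem?_tail]

theorem isPInj_unroll (hf : IsPInj n f) : IsPInj n (unroll e f) := by
  refine isPInj_piecewise _ (fun a ha b _ c hac hbc => listAssoc_inj
      (nodup_oneLine hf) (List.mem_toFinset.mp ha) hac hbc)
    (fun a _ b _ => hf a b) ?_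
  intro a _ b hb c hac hbc
  exact hb (List.mem_toFinset.mpr (List.mem_cons_of_mem _
    (mem_oneLine_of_apply_eq_some hf hbc (listAssoc_mem hac))))

theorem not_alwaysDefined_unroll (hf : IsPInj n f) (he : f e = none) (x : Fin n) :
    ¬ AlwaysDefined (unroll e f) x := by
  have htr := isTrajectory_unroll hf he
  intro hx
  by_cases hxl : x ∈ e :: oneLine f
  · exact htr.not_alwaysDefined hxl hx
  have hfx : AlwaysDefined f x := hx.of_restrict (S := {y | y ∈ e :: oneLine f})
    (fun y hy c hyc => unroll_apply_of_not_mem hy ▸ hyc)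
    (fun _ _ c _ hc hcl => htr.not_alwaysDefined hcl hc) hxl
  rw [← mem_alwaysDefinedSet, ← toFinset_oneLine hf, List.mem_toFinset] at hfx
  exact hxl (List.mem_cons_of_mem _ hfx)

theorem cyclesOn_unroll (hf : IsPInj n f) (he : f e = none) :
    cyclesOn e (oneLine f) (unroll e f) = f := by
  funext x
  by_cases hx : x ∈ oneLine f
  · have hx' : x ∈ (alwaysDefinedSet f).sort := by
      rwa [Finset.mem_sort, ← toFinset_oneLine hf, List.mem_toFinset]
    obtain ⟨i, hi, rfl⟩ := List.getElem_of_mem hx'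
    have := cyclesOn_apply_sort_getElem (e := e) (g := unroll e f) (nodup_oneLine hf)
      (i := i) (by rwa [toFinset_oneLine hf])
    simp only [toFinset_oneLine hf] at this
    rw [this, apply_sort_getElem hi]
  by_cases hxe : x = e
  · rw [hxe, he, cyclesOn_apply_self (List.nodup_cons.mp (nodup_cons_oneLine hf he)).1]
  · rw [cyclesOn_apply_of_not_mem hx hxe, unroll_apply_of_not_mem]
    exact fun h => (List.mem_cons.mp h).elim hxe hx

theorem trajectory_unroll (hf : IsPInj n f) (he : f e = none) :
    trajectory (unroll e f) n e = e :: oneLine f :=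
  (isTrajectory_unroll hf he).trajectory_eq
    ((nodup_oneLine hf).length_le_card.trans (Fintype.card_fin n).le)

end Unroll

section Roll

variable {e : Fin n} {g : Fin n → Option (Fin n)}

theorem cons_tail_trajectory (k : ℕ) : e :: (trajectory g k e).tail = trajectory g k e := by
  cases k <;> rfl

theorem nodup_cons_tail_trajectory (hnil : ∀ x, ¬ AlwaysDefined g x) :
    (e :: (trajectory g n e).tail).Nodup := by
  rw [cons_tail_trajectory]
  exact nodup_trajectory hnil n e

theorem isTrajectory_cons_tail_trajectory (hnil : ∀ x, ¬ AlwaysDefined g x) :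
    IsTrajectory g (e :: (trajectory g n e).tail) := by
  rw [cons_tail_trajectory]
  exact isTrajectory_trajectory n e
    ((nodup_trajectory hnil n e).length_le_card.trans (Fintype.card_fin n).le)

theorem isPInj_roll (hg : IsPInj n g) (hnil : ∀ x, ¬ AlwaysDefined g x) :
    IsPInj n (roll e g) :=
  isPInj_cyclesOn hg (isTrajectory_cons_tail_trajectory hnil) (nodup_cons_tail_trajectory hnil)

theorem roll_apply_self (hnil : ∀ x, ¬ AlwaysDefined g x) : roll e g e = none :=
  cyclesOn_apply_self (List.nodup_cons.mp (nodup_cons_tail_trajectory hnil)).1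

theorem unroll_roll (hg : IsPInj n g) (hnil : ∀ x, ¬ AlwaysDefined g x) :
    unroll e (roll e g) = g :=
  unroll_cyclesOn hg (isTrajectory_cons_tail_trajectory hnil) (nodup_cons_tail_trajectory hnil)
    hnil

theorem roll_unroll {f : Fin n → Option (Fin n)} (hf : IsPInj n f) (he : f e = none) :
    roll e (unroll e f) = f := by
  rw [roll, trajectory_unroll hf he, List.tail_cons, cyclesOn_unroll hf he]

end Roll

noncomputable def nilpotentEquiv (e : Fin n) :
    {α : PInj n // Nilpotent n α} ≃ {β : PInj n // β.val e = none} where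
  toFun α := ⟨⟨roll e α.1.1, isPInj_roll α.1.2 (nilpotent_iff.mp α.2)⟩,
    roll_apply_self (nilpotent_iff.mp α.2)⟩
  invFun β := ⟨⟨unroll e β.1.1, isPInj_unroll β.1.2⟩,
    nilpotent_iff.mpr (not_alwaysDefined_unroll β.1.2 β.2)⟩
  left_inv α := Subtype.ext (Subtype.ext (unroll_roll α.1.2 (nilpotent_iff.mp α.2)))
  right_inv β := Subtype.ext (Subtype.ext (roll_unroll β.1.2 β.2))

def lastEqNoneEquiv (m : ℕ) :
    {β : PInj (m + 1) // β.val (Fin.last m) = none} ≃ PInj2 m (m + 1) where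
  toFun β := ⟨Fin.init β.1.1, fun x y c hx hy => Fin.castSucc_injective _ (β.1.2 _ _ c hx hy)⟩
  invFun b := ⟨⟨Fin.snoc (α := fun _ => Option (Fin (m + 1))) b.1 none, by
    intro x y c hx hy
    induction x using Fin.lastCases with
    | last => simp at hx
    | cast x =>
      induction y using Fin.lastCases with
      | last => simp at hy
      | cast y =>
        simp only [Fin.snoc_castSucc] at hx hy
        rw [b.2 x y c hx hy]⟩, Fin.snoc_last (α := fun _ => Option (Fin (m + 1))) none b.1⟩
  left_inv := by
    rintro ⟨⟨β, -⟩, hlast⟩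
    refine Subtype.ext (Subtype.ext ?_)
    change Fin.snoc (Fin.init β) none = β
    rw [← hlast]
    exact Fin.snoc_init_self β
  right_inv b := Subtype.ext (Fin.init_snoc (α := fun _ => Option (Fin (m + 1))) none b.1)

theorem stmt13 (n : ℕ) :
    Set.ncard {α : PInj n | Nilpotent n α} = Nat.card (PInj2 (n - 1) n) := by
  rw [← Nat.card_coe_set_eq]
  apply Nat.card_congr
  cases n with
  | zero => exact Equiv.subtypeUnivEquiv fun α => ⟨1, one_pos, fun x => x.elim0⟩
  | succ m => exact (nilpotentEquiv (Fin.last m)).trans (lastEqNoneEquiv m)
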